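/- arXiv:2110.14163 — 5 statements merged into one kernel-verified Lean document; each statement's English description precedes it below -/
import Mathlib

section
/- For a feedforward network of depth L+1 with h^0 = x, h^k = σ(w^{k-1} h^{k-1}) for 1 ≤ k ≤ L, and logits z = w^L h^L, where |σ(x)| ≤ a|x| and |σ'| ≤ a, the trace of the correlation matrix of the Jacobian of any logit z_i with respect to the weights w^k of layer k satisfies tr(E[(∂z_i/∂w^k)(∂z_i/∂w^k)^T]) ≤ a^{2L} tr(E[x x^T]) ∏_{j=0, j≠k}^{L} ‖w^j‖₂². -/
/-!
The Jacobian of `z_i` with respect to `wᵏ` is the outer product of the backpropagated error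
`∂z_i/∂u^{k+1}` and the activation `hᵏ`, so its squared Euclidean norm is the product of their
squared norms. Going forward, each layer multiplies `‖hʲ‖²` by at most `a²‖wʲ‖₂²`; going
backward from `∂z_i/∂u^{L+1} = e_i`, each layer multiplies the squared error norm by at most
`a²‖w^{j+1}‖₂²`. Multiplying the two bounds and averaging over the input gives the claim.
-/

open scoped Matrix.Norms.L2Operator
open Matrix Finset

section SquaredNorm

variable {m n : Type*} [Fintype m] [Fintype n]

lemma dotProduct_self_eq_norm_sq (v : n → ℝ) :
    v ⬝ᵥ v = ‖(EuclideanSpace.equiv n ℝ).symm v‖ ^ 2 := by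
  rw [EuclideanSpace.real_norm_sq_eq]
  simp [dotProduct, sq]

lemma dotProduct_self_nonneg {R : Type*} [Ring R] [LinearOrder R] [IsStrictOrderedRing R]
    (v : n → R) : 0 ≤ v ⬝ᵥ v :=
  sum_nonneg fun r _ => mul_self_nonneg (v r)

lemma dotProduct_self_mulVec_le [DecidableEq n] (A : Matrix m n ℝ) (v : n → ℝ) :
    (A *ᵥ v) ⬝ᵥ (A *ᵥ v) ≤ ‖A‖ ^ 2 * (v ⬝ᵥ v) := by
  rw [dotProduct_self_eq_norm_sq, dotProduct_self_eq_norm_sq, ← mul_pow]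
  exact pow_le_pow_left₀ (norm_nonneg _) (A.l2_opNorm_mulVec _) 2

lemma dotProduct_self_vecMul_le [DecidableEq m] [DecidableEq n] (A : Matrix m n ℝ)
    (v : m → ℝ) : (v ᵥ* A) ⬝ᵥ (v ᵥ* A) ≤ ‖A‖ ^ 2 * (v ⬝ᵥ v) := by
  have hT : ‖Aᵀ‖ = ‖A‖ := by
    rw [← conjTranspose_eq_transpose_of_trivial, l2_opNorm_conjTranspose]
  simpa only [mulVec_transpose, hT] using dotProduct_self_mulVec_le Aᵀ v

lemma dotProduct_self_le_of_abs_le {a : ℝ} {u v : n → ℝ} (h : ∀ r, |u r| ≤ a * |v r|) :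
    u ⬝ᵥ u ≤ a ^ 2 * (v ⬝ᵥ v) := by
  rw [dotProduct, dotProduct, mul_sum]
  refine sum_le_sum fun r _ => ?_
  calc u r * u r = |u r| ^ 2 := by rw [sq_abs, sq]
    _ ≤ (a * |v r|) ^ 2 := pow_le_pow_left₀ (abs_nonneg _) (h r) 2
    _ = a ^ 2 * (v r * v r) := by rw [mul_pow, sq_abs, sq (v r)]

lemma dotProduct_self_prod {R : Type*} [CommSemiring R] (u : m → R) (v : n → R) :
    (fun p : m × n => u p.1 * v p.2) ⬝ᵥ (fun p : m × n => u p.1 * v p.2) =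
      (u ⬝ᵥ u) * (v ⬝ᵥ v) := by
  simp only [dotProduct, Fintype.sum_prod_type, sum_mul_sum]
  exact sum_congr rfl fun _ _ => sum_congr rfl fun _ _ => by ring

lemma trace_sum_smul_vecMulVec_self {Ω R : Type*} [Fintype Ω] [CommSemiring R] (μ : Ω → R)
    (v : Ω → n → R) :
    (∑ ω, μ ω • vecMulVec (v ω) (v ω)).trace = ∑ ω, μ ω * (v ω ⬝ᵥ v ω) := by
  simp [trace_sum, trace_smul]

end SquaredNorm

section Chains

variable {R : Type*} [CommSemiring R] [PartialOrder R] [IsOrderedRing R] {f c : ℕ → R}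

lemma le_prod_range_mul_of_succ_le (hc : ∀ j, 0 ≤ c j) {n : ℕ}
    (h : ∀ j < n, f (j + 1) ≤ c j * f j) : f n ≤ (∏ j ∈ range n, c j) * f 0 := by
  induction n with
  | zero => simp
  | succ n ih =>
    calc f (n + 1) ≤ c n * f n := h n n.lt_succ_self
      _ ≤ c n * ((∏ j ∈ range n, c j) * f 0) :=
        mul_le_mul_of_nonneg_left (ih fun j hj => h j (hj.trans n.lt_succ_self)) (hc n)
      _ = (∏ j ∈ range (n + 1), c j) * f 0 := by rw [prod_range_succ]; ring

lemma le_prod_Ico_mul_of_le_succ (hc : ∀ j, 0 ≤ c j) {k n : ℕ} (hkn : k ≤ n)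
    (h : ∀ j, k ≤ j → j < n → f j ≤ c j * f (j + 1)) : f k ≤ (∏ j ∈ Ico k n, c j) * f n := by
  induction n, hkn using Nat.le_induction with
  | base => simp
  | succ n hkn ih =>
    calc f k ≤ (∏ j ∈ Ico k n, c j) * f n :=
          ih fun j hkj hjn => h j hkj (hjn.trans n.lt_succ_self)
      _ ≤ (∏ j ∈ Ico k n, c j) * (c n * f (n + 1)) :=
        mul_le_mul_of_nonneg_left (h n hkn n.lt_succ_self) (prod_nonneg fun j _ => hc j)
      _ = (∏ j ∈ Ico k (n + 1), c j) * f (n + 1) := by rw [prod_Ico_succ_top hkn]; ring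

end Chains

lemma prod_range_erase_eq_mul_prod_Ico {M : Type*} [CommMonoid M] (f : ℕ → M) {k n : ℕ}
    (hk : k ≤ n) :
    ∏ j ∈ (range n).erase k, f j = (∏ j ∈ range k, f j) * ∏ j ∈ Ico (k + 1) n, f j := by
  have hsplit : (range n).erase k = range k ∪ Ico (k + 1) n := by
    ext j
    simp only [mem_erase, mem_range, mem_union, mem_Ico]
    omega
  rw [hsplit, prod_union]
  exact disjoint_left.2 fun j hj hj' => by simp only [mem_range, mem_Ico] at hj hj'; omega

section Layers

variable {ι : ℕ → Type*} [∀ j, Fintype (ι j)] [∀ j, DecidableEq (ι j)]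
  (W : (j : ℕ) → Matrix (ι (j + 1)) (ι j) ℝ) (a : ℝ)

lemma dotProduct_self_forward_le (h : (j : ℕ) → ι j → ℝ) {k : ℕ}
    (hstep : ∀ j < k, ∀ r, |h (j + 1) r| ≤ a * |(W j *ᵥ h j) r|) :
    h k ⬝ᵥ h k ≤ a ^ (2 * k) * (∏ j ∈ range k, ‖W j‖ ^ 2) * (h 0 ⬝ᵥ h 0) := by
  have hchain := le_prod_range_mul_of_succ_le (f := fun j => h j ⬝ᵥ h j)
    (c := fun j => a ^ 2 * ‖W j‖ ^ 2) (fun j => by positivity) fun j hj =>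
      (dotProduct_self_le_of_abs_le (hstep j hj)).trans
        (by rw [mul_assoc]; gcongr; exact dotProduct_self_mulVec_le _ _)
  simpa only [prod_mul_distrib, prod_const, card_range, pow_mul] using hchain

lemma dotProduct_self_backward_le (g : (j : ℕ) → ι (j + 1) → ℝ) {k L : ℕ} (hk : k ≤ L)
    (hstep : ∀ j, k ≤ j → j < L → ∀ r, |g j r| ≤ a * |(g (j + 1) ᵥ* W (j + 1)) r|) :
    g k ⬝ᵥ g k ≤ a ^ (2 * (L - k)) * (∏ j ∈ Ico (k + 1) (L + 1), ‖W j‖ ^ 2) * (g L ⬝ᵥ g L) := by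
  have hchain := le_prod_Ico_mul_of_le_succ (f := fun j => g j ⬝ᵥ g j)
    (c := fun j => a ^ 2 * ‖W (j + 1)‖ ^ 2) (fun j => by positivity) hk fun j hkj hjL =>
      (dotProduct_self_le_of_abs_le (hstep j hkj hjL)).trans
        (by rw [mul_assoc]; gcongr; exact dotProduct_self_vecMul_le _ _)
  rwa [prod_mul_distrib, prod_const, Nat.card_Ico, ← pow_mul,
    prod_Ico_add' (fun j => ‖W j‖ ^ 2)] at hchain

end Layers

theorem trace_logit_jacobian_corr_le_general
    {Ω : Type*} [Fintype Ω] (μ : Ω → ℝ) (hμ : ∀ ω, 0 ≤ μ ω)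
    (L : ℕ) (d : ℕ → ℕ)
    (W : (j : ℕ) → Matrix (Fin (d (j + 1))) (Fin (d j)) ℝ)
    (x : Ω → Fin (d 0) → ℝ)
    (σ : ℝ → ℝ) (a : ℝ) (hσ : ∀ t : ℝ, |σ t| ≤ a * |t|)
    (h : Ω → (k : ℕ) → Fin (d k) → ℝ)
    (hx : ∀ ω, h ω 0 = x ω)
    (hrec : ∀ ω, ∀ k < L, h ω (k + 1) = fun r => σ ((W k).mulVec (h ω k) r))
    (i : Fin (d (L + 1)))                                       -- the logit index
    (s : Ω → (k : ℕ) → Fin (d (k + 1)) → ℝ)                     -- σ'(u^{k+1})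
    (hs : ∀ ω k r, |s ω k r| ≤ a)
    (gH : Ω → (k : ℕ) → Fin (d k) → ℝ)                          -- ∂z_i/∂h^k
    (hgHL : ∀ ω, gH ω L = fun b => W L i b)
    (hgH : ∀ ω, ∀ k < L,
      gH ω k = Matrix.vecMul (fun r => gH ω (k + 1) r * s ω k r) (W k))
    (gU : Ω → (k : ℕ) → Fin (d (k + 1)) → ℝ)                    -- ∂z_i/∂u^{k+1}
    (hgUL : ∀ ω, gU ω L = Pi.single i 1)
    (hgU : ∀ ω, ∀ k < L, gU ω k = fun r => gH ω (k + 1) r * s ω k r)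
    (k : ℕ) (hk : k ≤ L) :
    (∑ ω, μ ω • Matrix.vecMulVec
        (fun rb : Fin (d (k + 1)) × Fin (d k) => gU ω k rb.1 * h ω k rb.2)
        (fun rb : Fin (d (k + 1)) × Fin (d k) => gU ω k rb.1 * h ω k rb.2)).trace ≤
      a ^ (2 * L) * (∑ ω, μ ω • Matrix.vecMulVec (x ω) (x ω)).trace *
        ∏ j ∈ (Finset.range (L + 1)).erase k, ‖W j‖ ^ 2 := by
  have hgH_eq : ∀ ω, ∀ j < L, gH ω (j + 1) = gU ω (j + 1) ᵥ* W (j + 1) := by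
    intro ω j hj
    rcases (Nat.succ_le_of_lt hj).eq_or_lt with rfl | hjL
    · rw [hgHL, hgUL, single_vecMul, one_smul]
      rfl
    · rw [hgH ω _ hjL, hgU ω _ hjL]
  have hfwd : ∀ ω, h ω k ⬝ᵥ h ω k ≤
      a ^ (2 * k) * (∏ j ∈ range k, ‖W j‖ ^ 2) * (x ω ⬝ᵥ x ω) := fun ω => by
    simpa only [hx] using dotProduct_self_forward_le W a (h ω) fun j hj r => by
      rw [hrec ω j (hj.trans_le hk)]
      exact hσ _
  have hbwd : ∀ ω, gU ω k ⬝ᵥ gU ω k ≤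
      a ^ (2 * (L - k)) * ∏ j ∈ Ico (k + 1) (L + 1), ‖W j‖ ^ 2 := fun ω => by
    simpa [hgUL] using dotProduct_self_backward_le (ι := fun j => Fin (d j)) W a (gU ω) hk
      fun j _ hjL r => by
        rw [hgU ω j hjL, ← hgH_eq ω j hjL, abs_mul, mul_comm]
        exact mul_le_mul_of_nonneg_right (hs ω j r) (abs_nonneg _)
  simp only [trace_sum_smul_vecMulVec_self, dotProduct_self_prod, mul_sum, sum_mul]
  refine sum_le_sum fun ω _ => ?_
  calc μ ω * ((gU ω k ⬝ᵥ gU ω k) * (h ω k ⬝ᵥ h ω k))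
      ≤ μ ω * ((a ^ (2 * (L - k)) * ∏ j ∈ Ico (k + 1) (L + 1), ‖W j‖ ^ 2) *
          (a ^ (2 * k) * (∏ j ∈ range k, ‖W j‖ ^ 2) * (x ω ⬝ᵥ x ω))) :=
        mul_le_mul_of_nonneg_left (mul_le_mul (hbwd ω) (hfwd ω) (dotProduct_self_nonneg _)
          ((dotProduct_self_nonneg _).trans (hbwd ω))) (hμ ω)
    _ = a ^ (2 * L) * (μ ω * (x ω ⬝ᵥ x ω)) * ∏ j ∈ (range (L + 1)).erase k, ‖W j‖ ^ 2 := by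
        rw [prod_range_erase_eq_mul_prod_Ico _ (by omega : k ≤ L + 1),
          show 2 * L = 2 * (L - k) + 2 * k by omega, pow_add]
        ring

/-- for a depth-`L+1` feedforward network `h⁰ = x`, `h^{k+1} = σ(Wₖ h^k)` for
`k < L`, logits `z = W_L h^L`, with `|σ(t)| ≤ a|t|` and `|σ'| ≤ a`, the trace of the
correlation matrix of the Jacobian of logit `z_i` w.r.t. the layer-`k` weights satisfies
`tr E[(∂z_i/∂wᵏ)(∂z_i/∂wᵏ)ᵀ] ≤ a^{2L} tr E[xxᵀ] ∏_{j ≤ L, j ≠ k} ‖wʲ‖₂²`.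
The backpropagated quantities `gH = ∂z_i/∂h^k` and `gU = ∂z_i/∂u^{k+1}` are specified via
their chain-rule recursions, with `s = σ'(u^{k+1})` bounded by `a` in magnitude. -/
theorem trace_logit_jacobian_corr_le
    {Ω : Type*} [Fintype Ω] (μ : Ω → ℝ) (hμ : ∀ ω, 0 ≤ μ ω) (hμ1 : ∑ ω, μ ω = 1)
    (L : ℕ) (d : ℕ → ℕ)
    (W : (j : ℕ) → Matrix (Fin (d (j + 1))) (Fin (d j)) ℝ)
    (x : Ω → Fin (d 0) → ℝ)
    (σ : ℝ → ℝ) (a : ℝ) (ha : 0 ≤ a) (hσ0 : σ 0 = 0) (hσ : ∀ t : ℝ, |σ t| ≤ a * |t|)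
    (h : Ω → (k : ℕ) → Fin (d k) → ℝ)
    (hx : ∀ ω, h ω 0 = x ω)
    (hrec : ∀ ω, ∀ k < L, h ω (k + 1) = fun r => σ ((W k).mulVec (h ω k) r))
    (i : Fin (d (L + 1)))                                       -- the logit index
    (s : Ω → (k : ℕ) → Fin (d (k + 1)) → ℝ)                     -- σ'(u^{k+1})
    (hs : ∀ ω k r, |s ω k r| ≤ a)
    (gH : Ω → (k : ℕ) → Fin (d k) → ℝ)                          -- ∂z_i/∂h^k
    (hgHL : ∀ ω, gH ω L = fun b => W L i b)
    (hgH : ∀ ω, ∀ k < L,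
      gH ω k = Matrix.vecMul (fun r => gH ω (k + 1) r * s ω k r) (W k))
    (gU : Ω → (k : ℕ) → Fin (d (k + 1)) → ℝ)                    -- ∂z_i/∂u^{k+1}
    (hgUL : ∀ ω, gU ω L = Pi.single i 1)
    (hgU : ∀ ω, ∀ k < L, gU ω k = fun r => gH ω (k + 1) r * s ω k r)
    (k : ℕ) (hk : k ≤ L) :
    (∑ ω, μ ω • Matrix.vecMulVec
        (fun rb : Fin (d (k + 1)) × Fin (d k) => gU ω k rb.1 * h ω k rb.2)
        (fun rb : Fin (d (k + 1)) × Fin (d k) => gU ω k rb.1 * h ω k rb.2)).trace ≤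
      a ^ (2 * L) * (∑ ω, μ ω • Matrix.vecMulVec (x ω) (x ω)).trace *
        ∏ j ∈ (Finset.range (L + 1)).erase k, ‖W j‖ ^ 2 :=
  trace_logit_jacobian_corr_le_general μ hμ L d W x σ a hσ h hx hrec i s hs gH hgHL hgH gU hgUL hgU
    k hk
end

section
/- For the softmax output distribution p_y = e^{z_y} / ∑_{y'} e^{z_{y'}} on m classes, the matrix ∑_{y=1}^{m} p_y (∂_z log p_y)(∂_z log p_y)^T equals (1 − ‖p‖₂²) I minus a positive semi-definite correction; in particular it is bounded above (in the Loewner order) by (1 − ‖p‖₂²) I, and hence by the identity matrix I. -/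
/-!
Writing `A = ∑_y p_y (e_y − p)(e_y − p)ᵀ`, Cauchy–Schwarz gives `v vᵀ ⪯ ‖v‖² I` for each rank-one
term, so `A ⪯ (tr A) I`. Since `∑_y p_y = 1`, the trace is
`∑_y p_y ‖e_y − p‖² = ∑_y p_y (1 − 2 p_y + ‖p‖²) = 1 − ‖p‖²`, and `(1 − ‖p‖²) I ⪯ I`.
-/

open Matrix

noncomputable def softmax {m : ℕ} (z : Fin m → ℝ) : Fin m → ℝ :=
  fun y => Real.exp (z y) / ∑ y', Real.exp (z y')

namespace Matrix

variable {n ι : Type*} [Fintype n] [DecidableEq n]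

theorem posSemidef_dotProduct_self_smul_one_sub_vecMulVec (v : n → ℝ) :
    ((v ⬝ᵥ v) • (1 : Matrix n n ℝ) - vecMulVec v v).PosSemidef := by
  have hv : (vecMulVec v v).IsHermitian := by
    simpa using (posSemidef_vecMulVec_self_star v).isHermitian
  refine .of_dotProduct_mulVec_nonneg ((isHermitian_one.smul (.all _)).sub hv) fun x => ?_
  have hcs : (v ⬝ᵥ x) ^ 2 ≤ (v ⬝ᵥ v) * (x ⬝ᵥ x) := by
    simpa only [dotProduct, sq] using Finset.sum_mul_sq_le_sq_mul_sq Finset.univ v x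
  simp only [star_trivial, sub_mulVec, smul_mulVec, one_mulVec, vecMulVec_mulVec, dotProduct_sub,
    dotProduct_smul, smul_eq_mul, MulOpposite.smul_eq_mul_unop, MulOpposite.unop_op]
  rw [dotProduct_comm x v, ← sq]
  linarith

theorem posSemidef_sum_smul_dotProduct_self_smul_one_sub_sum_smul_vecMulVec
    (s : Finset ι) (c : ι → ℝ) (hc : ∀ i ∈ s, 0 ≤ c i) (v : ι → n → ℝ) :
    ((∑ i ∈ s, c i * (v i ⬝ᵥ v i)) • (1 : Matrix n n ℝ) -
      ∑ i ∈ s, c i • vecMulVec (v i) (v i)).PosSemidef := by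
  have h := posSemidef_sum s fun i hi =>
    (posSemidef_dotProduct_self_smul_one_sub_vecMulVec (v i)).smul (hc i hi)
  simpa only [smul_sub, smul_smul, Finset.sum_sub_distrib, Finset.sum_smul] using h

end Matrix

theorem sum_mul_dotProduct_single_sub_self {n R : Type*} [Fintype n] [DecidableEq n]
    [CommRing R] (p : n → R) (hp : ∑ y, p y = 1) :
    ∑ y, p y * ((Pi.single y 1 - p) ⬝ᵥ (Pi.single y 1 - p)) = 1 - ∑ y, p y ^ 2 := by
  have hpp : p ⬝ᵥ p = ∑ y, p y ^ 2 := by simp only [dotProduct, sq]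
  have h : ∀ y, p y * ((Pi.single y 1 - p) ⬝ᵥ (Pi.single y 1 - p)) =
      p y - 2 * p y ^ 2 + p y * ∑ y, p y ^ 2 := by
    intro y
    simp only [sub_dotProduct, dotProduct_sub, single_dotProduct, dotProduct_single,
      Pi.sub_apply, Pi.single_eq_same, dotProduct_comm p, hpp]
    ring
  simp only [h, Finset.sum_add_distrib, Finset.sum_sub_distrib, ← Finset.mul_sum,
    ← Finset.sum_mul, hp]
  ring

theorem softmax_nonneg {m : ℕ} (z : Fin m → ℝ) (y : Fin m) : 0 ≤ softmax z y := by
  unfold softmax; positivity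

theorem sum_softmax {m : ℕ} (hm : 0 < m) (z : Fin m → ℝ) : ∑ y, softmax z y = 1 := by
  have hpos : 0 < ∑ y', Real.exp (z y') :=
    Finset.sum_pos (fun y _ => Real.exp_pos (z y)) ⟨⟨0, hm⟩, Finset.mem_univ _⟩
  simp only [softmax, ← Finset.sum_div, div_self hpos.ne']

/-- for the softmax distribution `p` on `m` classes with
`∂_z log p_y = e_y − p`, the matrix `∑_y p_y (e_y − p)(e_y − p)ᵀ` is bounded above in the
Loewner order by `(1 − ‖p‖₂²) I` (i.e. their difference is a positive semi-definite
correction), and hence also by the identity `I`. -/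
theorem softmax_score_outer_le
    {m : ℕ} (hm : 0 < m) (z : Fin m → ℝ) :
    (((1 - ∑ y, softmax z y ^ 2) • (1 : Matrix (Fin m) (Fin m) ℝ) -
        ∑ y, softmax z y •
          Matrix.vecMulVec (Pi.single y 1 - softmax z) (Pi.single y 1 - softmax z)).PosSemidef)
      ∧
    (((1 : Matrix (Fin m) (Fin m) ℝ) -
        ∑ y, softmax z y •
          Matrix.vecMulVec (Pi.single y 1 - softmax z) (Pi.single y 1 - softmax z)).PosSemidef) := by
  set p := softmax z
  have hle_trace := posSemidef_sum_smul_dotProduct_self_smul_one_sub_sum_smul_vecMulVec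
    Finset.univ p (fun y _ => softmax_nonneg z y) (fun y => Pi.single y 1 - p)
  rw [sum_mul_dotProduct_single_sub_self p (sum_softmax hm z)] at hle_trace
  have hsq : ((∑ y, p y ^ 2) • (1 : Matrix (Fin m) (Fin m) ℝ)).PosSemidef :=
    PosSemidef.one.smul (Finset.sum_nonneg fun y _ => sq_nonneg (p y))
  refine ⟨hle_trace, ?_⟩
  convert hsq.add hle_trace using 1
  rw [← add_sub_assoc, ← add_smul, add_sub_cancel, one_smul]
end

section
/- For any logit z_i of a feedforward network, the correlation matrix of its Jacobian with respect to the layer-k weights satisfies, in the Loewner order, E[(∂z_i/∂w^k)(∂z_i/∂w^k)^T] ⪯ a^{2(L−k)} (∏_{j=k+1}^{L} ‖w^j‖₂²) · I_{d_{k+1}} ⊗ E[h^k (h^k)^T]; consequently its sorted eigenvalues are bounded entrywise by a^{2(L−k)} ∏_{j=k+1}^{L} ‖w^j‖₂² times the sorted eigenvalues of I_{d_{k+1}} ⊗ E[h^k (h^k)^T]. -/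
/-!
Backpropagation writes `g = ∂z_i/∂u^{k+1}` as the unit vector `e_i` pushed through the transposed
weights `w^L, …, w^{k+1}`, each followed by a diagonal matrix of slopes bounded by `a`, so
`‖g‖² ≤ c := a^{2(L−k)} ∏_{j>k} ‖w^j‖₂²`. The Jacobian correlation is the average of
`(g gᵀ) ⊗ (h hᵀ)`, and `c I − g gᵀ` is positive semidefinite by Cauchy–Schwarz; Kronecker products
and nonnegative combinations of positive semidefinite matrices stay positive semidefinite.
For the eigenvalues, the span of the top `i + 1` eigenvectors of `M` meets the span of the bottom
`n − i` eigenvectors of `K` in some `v ≠ 0` (Courant–Fischer), and comparing the quadratic forms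
of `M` and `c K` at `v` gives `λ_i(M) ≤ c λ_i(K)`.
-/

open scoped Matrix.Norms.L2Operator Kronecker
open Matrix

/-- Eigenvalues of a Hermitian matrix sorted in descending order, indexed by
`Fin (Fintype.card ι)` (index `0` is the largest eigenvalue). -/
noncomputable def eigDesc {ι : Type*} [Fintype ι] [DecidableEq ι]
    {A : Matrix ι ι ℝ} (hA : A.IsHermitian) (i : Fin (Fintype.card ι)) : ℝ :=
  ((hA.eigenvalues ∘ (Fintype.equivFin ι).symm) ∘
    Tuple.sort (hA.eigenvalues ∘ (Fintype.equivFin ι).symm)) i.rev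

theorem Finset.sum_sq_mul_le_of_abs_le {ι : Type*} (s : Finset ι) (x t : ι → ℝ) {a : ℝ}
    (ht : ∀ b ∈ s, |t b| ≤ a) : ∑ b ∈ s, (x b * t b) ^ 2 ≤ a ^ 2 * ∑ b ∈ s, x b ^ 2 := by
  rw [Finset.mul_sum]
  refine Finset.sum_le_sum fun b hb => ?_
  rw [mul_pow, mul_comm (a ^ 2)]
  have hb := abs_le.1 (ht b hb)
  exact mul_le_mul_of_nonneg_left (sq_le_sq' hb.1 hb.2) (sq_nonneg _)

theorem Submodule.inf_ne_bot_of_finrank_lt_add {K V : Type*} [DivisionRing K] [AddCommGroup V]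
    [Module K V] [FiniteDimensional K V] {E F : Submodule K V}
    (h : Module.finrank K V < Module.finrank K E + Module.finrank K F) : E ⊓ F ≠ ⊥ := by
  intro hbot
  have hdim := Submodule.finrank_sup_add_finrank_inf_eq E F
  rw [hbot, finrank_bot] at hdim
  have := Submodule.finrank_le (E ⊔ F)
  omega

namespace Matrix

theorem sum_sq_vecMul_le {m n : Type*} [Fintype m] [Fintype n] [DecidableEq m] [DecidableEq n]
    (A : Matrix m n ℝ) (u : m → ℝ) : ∑ b, (u ᵥ* A) b ^ 2 ≤ ‖A‖ ^ 2 * ∑ r, u r ^ 2 := by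
  have h := Aᴴ.l2_opNorm_mulVec (WithLp.toLp 2 u)
  rw [l2_opNorm_conjTranspose, conjTranspose_eq_transpose_of_trivial, mulVec_transpose] at h
  rw [← EuclideanSpace.real_norm_sq_eq (WithLp.toLp 2 u), ← mul_pow]
  simpa [EuclideanSpace.real_norm_sq_eq] using pow_le_pow_left₀ (norm_nonneg _) h 2

theorem posSemidef_smul_one_sub_vecMulVec_self {m : Type*} [Fintype m] [DecidableEq m]
    (g : m → ℝ) {c : ℝ} (hg : ∑ r, g r ^ 2 ≤ c) :
    (c • (1 : Matrix m m ℝ) - vecMulVec g g).PosSemidef := by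
  refine PosSemidef.of_dotProduct_mulVec_nonneg ?_ fun y => ?_
  · simp [IsHermitian]
  · have hcs : (g ⬝ᵥ y) ^ 2 ≤ c * (y ⬝ᵥ y) := by
      calc (g ⬝ᵥ y) ^ 2 ≤ (∑ r, g r ^ 2) * ∑ r, y r ^ 2 := Finset.sum_mul_sq_le_sq_mul_sq _ g y
        _ ≤ c * (y ⬝ᵥ y) := by
          simp only [dotProduct, ← sq]
          gcongr
    simp only [star_trivial, sub_mulVec, smul_mulVec, one_mulVec, vecMulVec_mulVec,
      dotProduct_sub, dotProduct_smul, smul_eq_mul, op_smul_eq_mul, dotProduct_comm y g]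
    rw [← sq, sub_nonneg]
    exact hcs

theorem posSemidef_smul_one_kronecker_sub_sum_vecMulVec {m n Ω : Type*} [Fintype m] [Fintype n]
    [Fintype Ω] [DecidableEq m] (μ : Ω → ℝ) (hμ : ∀ ω, 0 ≤ μ ω) (g : Ω → m → ℝ)
    (h : Ω → n → ℝ) {c : ℝ} (hg : ∀ ω, ∑ r, g ω r ^ 2 ≤ c) :
    (c • ((1 : Matrix m m ℝ) ⊗ₖ ∑ ω, μ ω • vecMulVec (h ω) (h ω))
      - ∑ ω, μ ω • vecMulVec (fun p : m × n => g ω p.1 * h ω p.2)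
          (fun p : m × n => g ω p.1 * h ω p.2)).PosSemidef := by
  have hsplit : c • ((1 : Matrix m m ℝ) ⊗ₖ ∑ ω, μ ω • vecMulVec (h ω) (h ω))
      - ∑ ω, μ ω • vecMulVec (fun p : m × n => g ω p.1 * h ω p.2)
          (fun p : m × n => g ω p.1 * h ω p.2)
      = ∑ ω, μ ω • ((c • 1 - vecMulVec (g ω) (g ω)) ⊗ₖ vecMulVec (h ω) (h ω)) := by
    ext ⟨r, b⟩ ⟨r', b'⟩
    simp only [sub_apply, smul_apply, kronecker_apply, sum_apply, vecMulVec_apply, smul_eq_mul,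
      Finset.mul_sum, ← Finset.sum_sub_distrib]
    exact Finset.sum_congr rfl fun ω _ => by ring
  rw [hsplit]
  refine posSemidef_sum _ fun ω _ => PosSemidef.smul ?_ (hμ ω)
  refine (posSemidef_smul_one_sub_vecMulVec_self _ (hg ω)).kronecker ?_
  simpa using posSemidef_vecMulVec_self_star (h ω)

variable {ι : Type*} [Fintype ι] [DecidableEq ι]

theorem inner_toEuclideanLin_le_of_posSemidef_sub {A B : Matrix ι ι ℝ} (h : (B - A).PosSemidef)
    (v : EuclideanSpace ℝ ι) : inner ℝ v (toEuclideanLin A v) ≤ inner ℝ v (toEuclideanLin B v) := by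
  have := (isPositive_toEuclideanLin_iff.2 h).inner_nonneg_right v
  rw [map_sub, LinearMap.sub_apply, inner_sub_right] at this
  linarith

namespace IsHermitian

variable {A : Matrix ι ι ℝ} (hA : A.IsHermitian)
include hA

theorem repr_toEuclideanLin (v : EuclideanSpace ℝ ι) (j : ι) :
    hA.eigenvectorBasis.repr (toEuclideanLin A v) j
      = hA.eigenvalues j * hA.eigenvectorBasis.repr v j := by
  have hev : toEuclideanLin A (hA.eigenvectorBasis j)
      = hA.eigenvalues j • hA.eigenvectorBasis j :=
    (WithLp.ofLp_injective 2) (by simpa using hA.mulVec_eigenvectorBasis j)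
  rw [OrthonormalBasis.repr_apply_apply, OrthonormalBasis.repr_apply_apply,
    ← isSymmetric_toEuclideanLin_iff.2 hA, hev, real_inner_smul_left]

theorem inner_toEuclideanLin_sub_mul_norm_sq (c : ℝ) (v : EuclideanSpace ℝ ι) :
    inner ℝ v (toEuclideanLin A v) - c * ‖v‖ ^ 2
      = ∑ j, (hA.eigenvalues j - c) * hA.eigenvectorBasis.repr v j ^ 2 := by
  rw [← hA.eigenvectorBasis.repr.inner_map_map, ← hA.eigenvectorBasis.repr.norm_map,
    EuclideanSpace.real_norm_sq_eq, PiLp.inner_apply, Finset.mul_sum, ← Finset.sum_sub_distrib]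
  refine Finset.sum_congr rfl fun j _ => ?_
  rw [hA.repr_toEuclideanLin, RCLike.inner_apply, conj_trivial]
  ring

theorem repr_eq_zero_of_mem_span {S : Finset ι} {v : EuclideanSpace ℝ ι}
    (hv : v ∈ Submodule.span ℝ (hA.eigenvectorBasis '' S)) {j : ι} (hj : j ∉ S) :
    hA.eigenvectorBasis.repr v j = 0 := by
  have hperp : v ∈ (ℝ ∙ hA.eigenvectorBasis j)ᗮ := by
    refine Submodule.span_le.2 ?_ hv
    rintro _ ⟨m, hm, rfl⟩
    rw [SetLike.mem_coe, Submodule.mem_orthogonal_singleton_iff_inner_right]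
    exact hA.eigenvectorBasis.orthonormal.2 (ne_of_mem_of_not_mem hm hj).symm
  rwa [OrthonormalBasis.repr_apply_apply, ← Submodule.mem_orthogonal_singleton_iff_inner_right]

theorem finrank_span_eigenvectorBasis (S : Finset ι) :
    Module.finrank ℝ (Submodule.span ℝ (hA.eigenvectorBasis '' S)) = S.card := by
  have hli : LinearIndependent ℝ fun j : S => hA.eigenvectorBasis j :=
    hA.eigenvectorBasis.orthonormal.linearIndependent.comp _ Subtype.val_injective
  rw [Set.image_eq_range]
  exact (finrank_span_eq_card hli).trans (Fintype.card_coe S)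

theorem mul_norm_sq_le_inner_of_mem_span {S : Finset ι} {c : ℝ}
    (hS : ∀ j ∈ S, c ≤ hA.eigenvalues j) {v : EuclideanSpace ℝ ι}
    (hv : v ∈ Submodule.span ℝ (hA.eigenvectorBasis '' S)) :
    c * ‖v‖ ^ 2 ≤ inner ℝ v (toEuclideanLin A v) := by
  rw [← sub_nonneg, hA.inner_toEuclideanLin_sub_mul_norm_sq]
  refine Finset.sum_nonneg fun j _ => ?_
  by_cases hj : j ∈ S
  · exact mul_nonneg (sub_nonneg.2 (hS j hj)) (sq_nonneg _)
  · simp [hA.repr_eq_zero_of_mem_span hv hj]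

theorem inner_le_mul_norm_sq_of_mem_span {S : Finset ι} {c : ℝ}
    (hS : ∀ j ∈ S, hA.eigenvalues j ≤ c) {v : EuclideanSpace ℝ ι}
    (hv : v ∈ Submodule.span ℝ (hA.eigenvectorBasis '' S)) :
    inner ℝ v (toEuclideanLin A v) ≤ c * ‖v‖ ^ 2 := by
  rw [← sub_nonpos, hA.inner_toEuclideanLin_sub_mul_norm_sq]
  refine Finset.sum_nonpos fun j _ => ?_
  by_cases hj : j ∈ S
  · exact mul_nonpos_of_nonpos_of_nonneg (sub_nonpos.2 (hS j hj)) (sq_nonneg _)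
  · simp [hA.repr_eq_zero_of_mem_span hv hj]

theorem exists_card_eq_forall_eigDesc_le (i : Fin (Fintype.card ι)) :
    ∃ S : Finset ι, S.card = i + 1 ∧ ∀ j ∈ S, eigDesc hA i ≤ hA.eigenvalues j := by
  set f := hA.eigenvalues ∘ (Fintype.equivFin ι).symm
  refine ⟨(Finset.Ici i.rev).map (((Tuple.sort f).trans (Fintype.equivFin ι).symm).toEmbedding),
    ?_, ?_⟩
  · rw [Finset.card_map, Fin.card_Ici, Fin.val_rev]
    omega
  · simp only [Finset.mem_map, Finset.mem_Ici]
    rintro _ ⟨p, hp, rfl⟩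
    exact Tuple.monotone_sort f hp

theorem exists_card_eq_forall_le_eigDesc (i : Fin (Fintype.card ι)) :
    ∃ S : Finset ι, S.card = Fintype.card ι - i ∧ ∀ j ∈ S, hA.eigenvalues j ≤ eigDesc hA i := by
  set f := hA.eigenvalues ∘ (Fintype.equivFin ι).symm
  refine ⟨(Finset.Iic i.rev).map (((Tuple.sort f).trans (Fintype.equivFin ι).symm).toEmbedding),
    ?_, ?_⟩
  · rw [Finset.card_map, Fin.card_Iic, Fin.val_rev]
    omega
  · simp only [Finset.mem_map, Finset.mem_Iic]
    rintro _ ⟨p, hp, rfl⟩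
    exact Tuple.monotone_sort f hp

end IsHermitian

theorem eigDesc_le_mul_of_posSemidef {A B : Matrix ι ι ℝ} (hA : A.IsHermitian)
    (hB : B.IsHermitian) {c : ℝ} (hc : 0 ≤ c) (h : (c • B - A).PosSemidef)
    (i : Fin (Fintype.card ι)) : eigDesc hA i ≤ c * eigDesc hB i := by
  obtain ⟨SA, hSA, hAS⟩ := hA.exists_card_eq_forall_eigDesc_le i
  obtain ⟨SB, hSB, hBS⟩ := hB.exists_card_eq_forall_le_eigDesc i
  obtain ⟨v, ⟨hvA, hvB⟩, hv0⟩ := Submodule.exists_mem_ne_zero_of_ne_bot <|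
    Submodule.inf_ne_bot_of_finrank_lt_add (E := Submodule.span ℝ (hA.eigenvectorBasis '' SA))
      (F := Submodule.span ℝ (hB.eigenvectorBasis '' SB)) <| by
      rw [finrank_euclideanSpace, hA.finrank_span_eigenvectorBasis,
        hB.finrank_span_eigenvectorBasis, hSA, hSB]
      omega
  have hquad := inner_toEuclideanLin_le_of_posSemidef_sub h v
  rw [map_smul, LinearMap.smul_apply, real_inner_smul_right] at hquad
  refine le_of_mul_le_mul_right ?_ (pow_pos (norm_pos_iff.2 hv0) 2)
  calc eigDesc hA i * ‖v‖ ^ 2 ≤ inner ℝ v (toEuclideanLin A v) :=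
        hA.mul_norm_sq_le_inner_of_mem_span hAS hvA
    _ ≤ c * inner ℝ v (toEuclideanLin B v) := hquad
    _ ≤ c * (eigDesc hB i * ‖v‖ ^ 2) :=
        mul_le_mul_of_nonneg_left (hB.inner_le_mul_norm_sq_of_mem_span hBS hvB) hc
    _ = c * eigDesc hB i * ‖v‖ ^ 2 := by ring

end Matrix

theorem sum_sq_backprop_le {d : ℕ → ℕ} (W : (j : ℕ) → Matrix (Fin (d (j + 1))) (Fin (d j)) ℝ)
    (s : (k : ℕ) → Fin (d (k + 1)) → ℝ) {a : ℝ} (hs : ∀ k r, |s k r| ≤ a)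
    (g : (k : ℕ) → Fin (d (k + 1)) → ℝ) {L : ℕ} (hgL : ∑ r, g L r ^ 2 ≤ 1)
    (hg : ∀ k < L, ∀ r, g k r = (g (k + 1) ᵥ* W (k + 1)) r * s k r) {k : ℕ} (hk : k ≤ L) :
    ∑ r, g k r ^ 2 ≤ a ^ (2 * (L - k)) * ∏ j ∈ Finset.Icc (k + 1) L, ‖W j‖ ^ 2 := by
  induction hk using Nat.decreasingInduction with
  | self => simpa using hgL
  | of_succ k hk ih =>
    have hprod : ∏ j ∈ Finset.Icc (k + 1) L, ‖W j‖ ^ 2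
        = ‖W (k + 1)‖ ^ 2 * ∏ j ∈ Finset.Icc (k + 1 + 1) L, ‖W j‖ ^ 2 := by
      rw [← Finset.mul_prod_Ioc_eq_prod_Icc hk, ← Finset.Icc_add_one_left_eq_Ioc]
    calc ∑ r, g k r ^ 2 = ∑ r, ((g (k + 1) ᵥ* W (k + 1)) r * s k r) ^ 2 := by
          simp only [hg k hk]
      _ ≤ a ^ 2 * (‖W (k + 1)‖ ^ 2 * ∑ r, g (k + 1) r ^ 2) := by
          grw [Finset.sum_sq_mul_le_of_abs_le _ _ _ fun r _ => hs k r, sum_sq_vecMul_le]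
      _ ≤ a ^ 2 * (‖W (k + 1)‖ ^ 2 *
            (a ^ (2 * (L - (k + 1))) * ∏ j ∈ Finset.Icc (k + 1 + 1) L, ‖W j‖ ^ 2)) := by
          gcongr
      _ = a ^ (2 * (L - k)) * ∏ j ∈ Finset.Icc (k + 1) L, ‖W j‖ ^ 2 := by
          rw [hprod, show L - k = L - (k + 1) + 1 by omega]
          ring

theorem logit_jacobian_corr_loewner_le_general
    {Ω : Type*} [Fintype Ω] (μ : Ω → ℝ) (hμ : ∀ ω, 0 ≤ μ ω)
    (L : ℕ) (d : ℕ → ℕ)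
    (W : (j : ℕ) → Matrix (Fin (d (j + 1))) (Fin (d j)) ℝ)
    (a : ℝ)
    (h : Ω → (k : ℕ) → Fin (d k) → ℝ)
    (i : Fin (d (L + 1)))                                       -- the logit index
    (s : Ω → (k : ℕ) → Fin (d (k + 1)) → ℝ)                     -- σ'(u^{k+1})
    (hs : ∀ ω k r, |s ω k r| ≤ a)
    (gH : Ω → (k : ℕ) → Fin (d k) → ℝ)                          -- ∂z_i/∂h^k
    (hgHL : ∀ ω, gH ω L = fun b => W L i b)
    (hgH : ∀ ω, ∀ k < L,
      gH ω k = Matrix.vecMul (fun r => gH ω (k + 1) r * s ω k r) (W k))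
    (gU : Ω → (k : ℕ) → Fin (d (k + 1)) → ℝ)                    -- ∂z_i/∂u^{k+1}
    (hgUL : ∀ ω, gU ω L = Pi.single i 1)
    (hgU : ∀ ω, ∀ k < L, gU ω k = fun r => gH ω (k + 1) r * s ω k r)
    (k : ℕ) (hk : k ≤ L)
    -- `M` : the Jacobian correlation matrix, `K = I ⊗ E[hᵏ hᵏᵀ]`
    (M K : Matrix (Fin (d (k + 1)) × Fin (d k)) (Fin (d (k + 1)) × Fin (d k)) ℝ)
    (hM : M = ∑ ω, μ ω • Matrix.vecMulVec
        (fun rb : Fin (d (k + 1)) × Fin (d k) => gU ω k rb.1 * h ω k rb.2)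
        (fun rb : Fin (d (k + 1)) × Fin (d k) => gU ω k rb.1 * h ω k rb.2))
    (hK : K = (1 : Matrix (Fin (d (k + 1))) (Fin (d (k + 1))) ℝ) ⊗ₖ
        (∑ ω, μ ω • Matrix.vecMulVec (h ω k) (h ω k)))
    (hMh : M.IsHermitian) (hKh : K.IsHermitian) :
    ((a ^ (2 * (L - k)) * ∏ j ∈ Finset.Icc (k + 1) L, ‖W j‖ ^ 2) • K - M).PosSemidef
    ∧ ∀ i', eigDesc hMh i' ≤
        (a ^ (2 * (L - k)) * ∏ j ∈ Finset.Icc (k + 1) L, ‖W j‖ ^ 2) * eigDesc hKh i' := by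
  have hgH_eq : ∀ ω, ∀ k' ≤ L, gH ω k' = gU ω k' ᵥ* W k' := by
    intro ω k' hk'
    rcases hk'.lt_or_eq with hlt | rfl
    · rw [hgH ω k' hlt, hgU ω k' hlt]
    · rw [hgHL ω, hgUL ω, single_one_vecMul]
      rfl
  have hback : ∀ ω, ∀ k' < L, ∀ r,
      gU ω k' r = (gU ω (k' + 1) ᵥ* W (k' + 1)) r * s ω k' r := fun ω k' hk' r => by
    rw [hgU ω k' hk', hgH_eq ω (k' + 1) hk']
  have hgUL_sq : ∀ ω, ∑ r, gU ω L r ^ 2 ≤ 1 := fun ω => by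
    simp [hgUL ω, Pi.single_apply]
  set c := a ^ (2 * (L - k)) * ∏ j ∈ Finset.Icc (k + 1) L, ‖W j‖ ^ 2
  have hgrad : ∀ ω, ∑ r, gU ω k r ^ 2 ≤ c := fun ω =>
    sum_sq_backprop_le W (s ω) (hs ω) (gU ω) (hgUL_sq ω) (hback ω) hk
  have hpsd : (c • K - M).PosSemidef := by
    subst hM hK
    exact posSemidef_smul_one_kronecker_sub_sum_vecMulVec μ hμ (fun ω => gU ω k)
      (fun ω => h ω k) hgrad
  have hc : 0 ≤ c := mul_nonneg ((even_two_mul _).pow_nonneg a) (by positivity)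
  exact ⟨hpsd, eigDesc_le_mul_of_posSemidef hMh hKh hc hpsd⟩

/-- for any logit `z_i` of a feedforward network, the correlation matrix of its
Jacobian w.r.t. the layer-`k` weights (with `∂z_i/∂wᵏ = ∂z_i/∂u^{k+1} ⊗ hᵏ`) satisfies
`E[(∂z_i/∂wᵏ)(∂z_i/∂wᵏ)ᵀ] ⪯ a^{2(L−k)} (∏_{j=k+1}^{L} ‖wʲ‖₂²) · I_{d(k+1)} ⊗ E[hᵏ hᵏᵀ]`
in the Loewner order; consequently its sorted eigenvalues are bounded entrywise by the
constant times the sorted eigenvalues of `I ⊗ E[hᵏ hᵏᵀ]`. -/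
theorem logit_jacobian_corr_loewner_le
    {Ω : Type*} [Fintype Ω] (μ : Ω → ℝ) (hμ : ∀ ω, 0 ≤ μ ω) (hμ1 : ∑ ω, μ ω = 1)
    (L : ℕ) (d : ℕ → ℕ)
    (W : (j : ℕ) → Matrix (Fin (d (j + 1))) (Fin (d j)) ℝ)
    (x : Ω → Fin (d 0) → ℝ)
    (σ : ℝ → ℝ) (a : ℝ) (ha : 0 ≤ a) (hσ0 : σ 0 = 0) (hσ : ∀ t : ℝ, |σ t| ≤ a * |t|)
    (h : Ω → (k : ℕ) → Fin (d k) → ℝ)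
    (hx : ∀ ω, h ω 0 = x ω)
    (hrec : ∀ ω, ∀ k < L, h ω (k + 1) = fun r => σ ((W k).mulVec (h ω k) r))
    (i : Fin (d (L + 1)))                                       -- the logit index
    (s : Ω → (k : ℕ) → Fin (d (k + 1)) → ℝ)                     -- σ'(u^{k+1})
    (hs : ∀ ω k r, |s ω k r| ≤ a)
    (gH : Ω → (k : ℕ) → Fin (d k) → ℝ)                          -- ∂z_i/∂h^k
    (hgHL : ∀ ω, gH ω L = fun b => W L i b)
    (hgH : ∀ ω, ∀ k < L,
      gH ω k = Matrix.vecMul (fun r => gH ω (k + 1) r * s ω k r) (W k))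
    (gU : Ω → (k : ℕ) → Fin (d (k + 1)) → ℝ)                    -- ∂z_i/∂u^{k+1}
    (hgUL : ∀ ω, gU ω L = Pi.single i 1)
    (hgU : ∀ ω, ∀ k < L, gU ω k = fun r => gH ω (k + 1) r * s ω k r)
    (k : ℕ) (hk : k ≤ L)
    -- `M` : the Jacobian correlation matrix, `K = I ⊗ E[hᵏ hᵏᵀ]`
    (M K : Matrix (Fin (d (k + 1)) × Fin (d k)) (Fin (d (k + 1)) × Fin (d k)) ℝ)
    (hM : M = ∑ ω, μ ω • Matrix.vecMulVec
        (fun rb : Fin (d (k + 1)) × Fin (d k) => gU ω k rb.1 * h ω k rb.2)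
        (fun rb : Fin (d (k + 1)) × Fin (d k) => gU ω k rb.1 * h ω k rb.2))
    (hK : K = (1 : Matrix (Fin (d (k + 1))) (Fin (d (k + 1))) ℝ) ⊗ₖ
        (∑ ω, μ ω • Matrix.vecMulVec (h ω k) (h ω k)))
    (hMh : M.IsHermitian) (hKh : K.IsHermitian) :
    ((a ^ (2 * (L - k)) * ∏ j ∈ Finset.Icc (k + 1) L, ‖W j‖ ^ 2) • K - M).PosSemidef
    ∧ ∀ i', eigDesc hMh i' ≤
        (a ^ (2 * (L - k)) * ∏ j ∈ Finset.Icc (k + 1) L, ‖W j‖ ^ 2) * eigDesc hKh i' :=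
  logit_jacobian_corr_loewner_le_general μ hμ L d W a h i s hs gH hgHL hgH gU hgUL hgU k hk M K hM
    hK hMh hKh
end

section
/- With the optimal posterior Σ_q^{-1} = 2(n−1)H + εI for a quadratic loss with Hessian H having eigenvalues λ_1 ≥ … ≥ λ_p ≥ 0, the excess expected loss equals E_{w'∼Q}[ℓ(w')] − ℓ(w) = (1/2) ∑_{i=1}^p λ_i / (2(n−1)λ_i + ε); moreover this is at most (p(n,ε) + 1/c)/(4(n−1)) whenever λ_i ≤ (ε/(2(n−1))) e^{−c(i − p(n,ε))} for all i > p(n,ε), where p(n,ε) = #{i : λ_i ≥ ε/(2(n−1))} and c > 0. -/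
open Matrix MeasureTheory

/-- Density of the multivariate Gaussian `N(μ, S)` on `ℝ^p`. -/
noncomputable def gaussianPdf {p : ℕ} (μ : Fin p → ℝ) (S : Matrix (Fin p) (Fin p) ℝ)
    (x : Fin p → ℝ) : ℝ :=
  (Real.sqrt ((2 * Real.pi) ^ p * S.det))⁻¹ *
    Real.exp (-(1 / 2) * ((x - μ) ⬝ᵥ S⁻¹.mulVec (x - μ)))

/-- KL divergence between the Gaussians `N(μq, Sq)` and `N(μp, Sp)` on `ℝ^p`,
`KL(Q,P) = ∫ q(w) log(q(w)/p(w)) dw`. -/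
noncomputable def klGauss {p : ℕ} (μq : Fin p → ℝ) (Sq : Matrix (Fin p) (Fin p) ℝ)
    (μp : Fin p → ℝ) (Sp : Matrix (Fin p) (Fin p) ℝ) : ℝ :=
  ∫ x : Fin p → ℝ,
    gaussianPdf μq Sq x * Real.log (gaussianPdf μq Sq x / gaussianPdf μp Sp x)

/-! After the volume-preserving substitution `x = w + U y`, the density of `N(w, Σ_q)` becomes
a product of centred one-dimensional Gaussian densities with variances
`vᵢ = 1/(2(n−1)λᵢ+ε)` and the quadratic part of the loss becomes `½ ∑ λᵢ yᵢ²`, so by Fubini and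
`E[yᵢ²] = vᵢ` the excess loss is `½ ∑ λᵢ vᵢ`. Each term `λᵢ vᵢ` is at most `1/(2(n−1))`, and past
`p(n,ε)` it is at most `λᵢ/ε ≤ e^{−c(i+1−p(n,ε))}/(2(n−1))`; the geometric tail sums to at most
`e^{−c}/(1−e^{−c}) ≤ 1/c`. -/

open scoped NNReal

namespace Matrix

variable {ι : Type*} [Fintype ι] [DecidableEq ι] {U : Matrix ι ι ℝ}

lemma abs_det_eq_one_of_mul_transpose_eq_one (hU : U * Uᵀ = 1) : |U.det| = 1 := by
  have h : U.det * U.det = 1 := by simpa using congrArg det hU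
  rcases mul_self_eq_one_iff.mp h with h | h <;> simp [h]

lemma measurePreserving_mulVec_of_mul_transpose_eq_one (hU : U * Uᵀ = 1) :
    MeasurePreserving (U *ᵥ ·) volume volume := by
  have hdet : U.det ≠ 0 := by
    intro h
    simpa [h] using abs_det_eq_one_of_mul_transpose_eq_one hU
  refine ⟨(toLin' U).continuous_of_finiteDimensional.measurable, ?_⟩
  have hmap := Real.map_matrix_volume_pi_eq_smul_volume_pi hdet
  rwa [abs_inv, abs_det_eq_one_of_mul_transpose_eq_one hU, inv_one, ENNReal.ofReal_one,
    one_smul] at hmap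

lemma integral_comp_add_mulVec_of_mul_transpose_eq_one (hU : U * Uᵀ = 1)
    (w : ι → ℝ) (f : (ι → ℝ) → ℝ) :
    ∫ y, f (w + U *ᵥ y) = ∫ x, f x := by
  let e : (ι → ℝ) ≃L[ℝ] (ι → ℝ) :=
    (toLin'OfInv (mul_eq_one_comm.mp hU) hU).toContinuousLinearEquiv
  have he : MeasurableEmbedding (U *ᵥ ·) := e.toHomeomorph.measurableEmbedding
  rw [← integral_add_left_eq_self (μ := volume) f w]
  exact (measurePreserving_mulVec_of_mul_transpose_eq_one hU).integral_comp he (f <| w + ·)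

lemma conj_diagonal_mul_conj_diagonal (hU : U * Uᵀ = 1) (d e : ι → ℝ) :
    (U * diagonal d * Uᵀ) * (U * diagonal e * Uᵀ) = U * diagonal (d * e) * Uᵀ := by
  calc (U * diagonal d * Uᵀ) * (U * diagonal e * Uᵀ)
      = U * (diagonal d * (Uᵀ * U) * diagonal e) * Uᵀ := by simp only [Matrix.mul_assoc]
    _ = U * diagonal (d * e) * Uᵀ := by
      rw [mul_eq_one_comm.mp hU, Matrix.mul_one, diagonal_mul_diagonal]
      rfl

lemma inv_conj_diagonal (hU : U * Uᵀ = 1) {d : ι → ℝ} (hd : ∀ i, d i ≠ 0) :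
    (U * diagonal d * Uᵀ)⁻¹ = U * diagonal d⁻¹ * Uᵀ := by
  refine inv_eq_right_inv ?_
  have hdd : d * d⁻¹ = 1 := funext fun i => mul_inv_cancel₀ (hd i)
  rw [conj_diagonal_mul_conj_diagonal hU, hdd, diagonal_one', Matrix.mul_one, hU]

lemma det_conj_diagonal (hU : U * Uᵀ = 1) (d : ι → ℝ) :
    (U * diagonal d * Uᵀ).det = ∏ i, d i := by
  have h : U.det * U.det = 1 := by simpa using congrArg det hU
  rw [det_mul, det_mul, det_transpose, det_diagonal]
  linear_combination (∏ i, d i) * h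

lemma mulVec_dotProduct_conj_diagonal_mulVec (hU : U * Uᵀ = 1) (d y : ι → ℝ) :
    (U *ᵥ y) ⬝ᵥ (U * diagonal d * Uᵀ) *ᵥ (U *ᵥ y) = ∑ i, d i * y i ^ 2 := by
  have hU' := mul_eq_one_comm.mp hU
  rw [mulVec_mulVec, Matrix.mul_assoc, hU', Matrix.mul_one, ← mulVec_mulVec, dotProduct_mulVec,
    vecMul_mulVec, hU', vecMul_one]
  simp only [dotProduct, mulVec_diagonal]
  exact Finset.sum_congr rfl fun i _ => by ring

end Matrix

namespace ProbabilityTheory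

lemma integrable_gaussianPDFReal_mul_sq (v : ℝ≥0) :
    Integrable (fun x => gaussianPDFReal 0 v x * x ^ 2) := by
  by_cases hv : v = 0
  · simp [hv]
  have h := (memLp_id_gaussianReal (μ := 0) (v := v) 2).integrable_sq
  rw [gaussianReal_of_var_ne_zero _ hv, integrable_withDensity_iff_integrable_smul'
    (measurable_gaussianPDF _ _) (ae_of_all _ fun _ => gaussianPDF_lt_top)] at h
  simpa [toReal_gaussianPDF] using h

lemma integral_gaussianPDFReal_mul_sq (v : ℝ≥0) :
    ∫ x, gaussianPDFReal 0 v x * x ^ 2 = v := by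
  by_cases hv : v = 0
  · simp [hv]
  rw [← variance_id_gaussianReal (μ := 0) (v := v),
    variance_of_integral_eq_zero measurable_id.aemeasurable (by simp),
    integral_gaussianReal_eq_integral_smul hv]
  simp

variable {ι : Type*} [Fintype ι] {v : ι → ℝ≥0}

lemma integrable_prod_gaussianPDFReal :
    Integrable (fun y : ι → ℝ => ∏ i, gaussianPDFReal 0 (v i) (y i)) :=
  Integrable.fintype_prod (f := fun i => gaussianPDFReal 0 (v i))
    fun i => integrable_gaussianPDFReal 0 (v i)

lemma integral_prod_gaussianPDFReal (hv : ∀ i, v i ≠ 0) :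
    ∫ y : ι → ℝ, ∏ i, gaussianPDFReal 0 (v i) (y i) = 1 := by
  rw [integral_fintype_prod_volume_eq_prod (fun i => gaussianPDFReal 0 (v i))]
  exact Finset.prod_eq_one fun i _ => integral_gaussianPDFReal_eq_one 0 (hv i)

lemma prod_gaussianPDFReal_mul_sq [DecidableEq ι] (y : ι → ℝ) (i : ι) :
    (∏ j, gaussianPDFReal 0 (v j) (y j)) * y i ^ 2 =
      ∏ j, gaussianPDFReal 0 (v j) (y j) * if j = i then y j ^ 2 else 1 := by
  rw [Finset.prod_mul_distrib, Finset.prod_ite_eq']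
  simp

lemma integrable_prod_gaussianPDFReal_mul_sq (i : ι) :
    Integrable (fun y : ι → ℝ => (∏ j, gaussianPDFReal 0 (v j) (y j)) * y i ^ 2) := by
  classical
  simp_rw [prod_gaussianPDFReal_mul_sq]
  refine Integrable.fintype_prod
    (f := fun j x => gaussianPDFReal 0 (v j) x * if j = i then x ^ 2 else 1) fun j => ?_
  split_ifs
  · exact integrable_gaussianPDFReal_mul_sq (v j)
  · simpa using integrable_gaussianPDFReal 0 (v j)

lemma integral_prod_gaussianPDFReal_mul_sq (hv : ∀ i, v i ≠ 0) (i : ι) :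
    ∫ y : ι → ℝ, (∏ j, gaussianPDFReal 0 (v j) (y j)) * y i ^ 2 = v i := by
  classical
  simp_rw [prod_gaussianPDFReal_mul_sq]
  rw [integral_fintype_prod_volume_eq_prod
    (fun j x => gaussianPDFReal 0 (v j) x * if j = i then x ^ 2 else 1), Finset.prod_eq_single i]
  · simpa using integral_gaussianPDFReal_mul_sq (v i)
  · intro j _ hj
    simpa [hj] using integral_gaussianPDFReal_eq_one 0 (hv j)
  · simp

end ProbabilityTheory

open ProbabilityTheory

section GaussianExpectation

variable {p : ℕ} {U : Matrix (Fin p) (Fin p) ℝ} {v : Fin p → ℝ≥0}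

lemma gaussianPdf_add_mulVec (hU : U * Uᵀ = 1) (hv : ∀ i, v i ≠ 0) (w y : Fin p → ℝ) :
    gaussianPdf w (U * diagonal (fun i => (v i : ℝ)) * Uᵀ) (w + U *ᵥ y) =
      ∏ i, gaussianPDFReal 0 (v i) (y i) := by
  rw [gaussianPdf, add_sub_cancel_left, inv_conj_diagonal hU (by exact_mod_cast hv),
    det_conj_diagonal hU, mulVec_dotProduct_conj_diagonal_mulVec hU]
  simp only [gaussianPDFReal, Finset.prod_mul_distrib, ← Real.exp_sum, Finset.prod_inv_distrib,
    Finset.mul_sum]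
  rw [← Real.sqrt_prod _ (fun i _ => by positivity), Finset.prod_mul_distrib]
  congr 2
  · simp
  · refine Finset.sum_congr rfl fun i _ => ?_
    simp only [Pi.inv_apply, sub_zero]
    field_simp

theorem integral_gaussianPdf_mul_quadratic (hU : U * Uᵀ = 1) (hv : ∀ i, v i ≠ 0)
    (w lam : Fin p → ℝ) (ℓw : ℝ) :
    ∫ x, gaussianPdf w (U * diagonal (fun i => (v i : ℝ)) * Uᵀ) x *
        (ℓw + 1 / 2 * ((x - w) ⬝ᵥ (U * diagonal lam * Uᵀ) *ᵥ (x - w))) =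
      ℓw + 1 / 2 * ∑ i, lam i * v i := by
  set G : (Fin p → ℝ) → ℝ := fun y => ∏ i, gaussianPDFReal 0 (v i) (y i)
  have hexpand : ∀ y, G y * (ℓw + 1 / 2 * ∑ i, lam i * y i ^ 2) =
      ℓw * G y + ∑ i, lam i / 2 * (G y * y i ^ 2) := fun y => by
    rw [mul_add, Finset.mul_sum, Finset.mul_sum, mul_comm]
    exact congrArg _ (Finset.sum_congr rfl fun i _ => by ring)
  have hsq := integrable_prod_gaussianPDFReal_mul_sq (v := v)
  rw [← integral_comp_add_mulVec_of_mul_transpose_eq_one hU w]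
  simp_rw [add_sub_cancel_left, gaussianPdf_add_mulVec hU hv,
    mulVec_dotProduct_conj_diagonal_mulVec hU]
  rw [integral_congr_ae (Filter.Eventually.of_forall hexpand),
    integral_add (integrable_prod_gaussianPDFReal.const_mul ℓw)
      (integrable_finsetSum _ fun i _ => (hsq i).const_mul _),
    integral_finsetSum _ fun i _ => (hsq i).const_mul _]
  simp only [integral_const_mul, integral_prod_gaussianPDFReal hv,
    integral_prod_gaussianPDFReal_mul_sq hv, Finset.mul_sum]
  congr 1
  · ring
  · exact Finset.sum_congr rfl fun i _ => by ring

end GaussianExpectation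

section ExponentialDecay

open Finset

lemma sum_le_of_le_of_le_geometric_tail {p N : ℕ} {t : Fin p → ℝ} {B r : ℝ} (hB : 0 ≤ B)
    (hr0 : 0 ≤ r) (hr1 : r < 1) (hhead : ∀ i : Fin p, (i : ℕ) < N → t i ≤ B)
    (htail : ∀ i : Fin p, N ≤ (i : ℕ) → t i ≤ B * r ^ ((i : ℕ) + 1 - N)) :
    ∑ i, t i ≤ B * (N + r / (1 - r)) := by
  set h : ℕ → ℝ := fun k => if k < N then B else B * r ^ (k + 1 - N)
  have hgeom : ∑ k ∈ range p, r ^ (k + 1) ≤ r / (1 - r) := by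
    simpa [sum_Ico_eq_sum_range, add_comm] using
      geom_sum_Ico_le_of_lt_one (m := 1) (n := p + 1) hr0 hr1
  calc ∑ i, t i ≤ ∑ i : Fin p, h i := sum_le_sum fun i _ => by
        simp only [h]; split_ifs with hi
        exacts [hhead i hi, htail i (not_lt.mp hi)]
    _ = ∑ k ∈ range p, h k := Fin.sum_univ_eq_sum_range h p
    _ ≤ ∑ k ∈ range (N + p), h k :=
        sum_le_sum_of_subset_of_nonneg (range_mono (by omega)) fun k _ _ => by
          simp only [h]; split_ifs <;> positivity
    _ = N * B + B * ∑ k ∈ range p, r ^ (k + 1) := by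
        rw [sum_range_add, mul_sum]
        congr 1
        · rw [sum_congr rfl fun k hk => if_pos (mem_range.mp hk), sum_const, card_range,
            nsmul_eq_mul]
        · exact sum_congr rfl fun k _ => by
            simp only [h, if_neg (Nat.not_lt.mpr (Nat.le_add_right N k))]
            congr 2
            omega
    _ ≤ B * (N + r / (1 - r)) := by nlinarith

lemma exp_neg_div_one_sub_exp_neg_le_inv {c : ℝ} (hc : 0 < c) :
    Real.exp (-c) / (1 - Real.exp (-c)) ≤ c⁻¹ := by
  have hmul : Real.exp (-c) * Real.exp c = 1 := by
    rw [← Real.exp_add, neg_add_cancel, Real.exp_zero]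
  have hlt : Real.exp (-c) < 1 := Real.exp_lt_one_iff.mpr (neg_neg_of_pos hc)
  rw [div_le_iff₀ (sub_pos.mpr hlt), inv_mul_eq_div, le_div_iff₀ hc]
  nlinarith [Real.add_one_le_exp c, Real.exp_pos (-c)]

lemma sum_div_mul_add_le_of_exp_decay {p N : ℕ} {m ε c : ℝ} (hm : 0 < m) (hε : 0 < ε)
    (hc : 0 < c) {lam : Fin p → ℝ} (hnn : ∀ i, 0 ≤ lam i)
    (hdecay : ∀ i : Fin p, N ≤ (i : ℕ) →
      lam i ≤ ε / m * Real.exp (-c * (((i : ℕ) : ℝ) + 1 - N))) :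
    ∑ i, lam i / (m * lam i + ε) ≤ (N + c⁻¹) / m := by
  have hhead : ∀ i, lam i / (m * lam i + ε) ≤ m⁻¹ := fun i => by
    have := hnn i
    rw [div_le_iff₀ (by positivity), inv_mul_eq_div, le_div_iff₀ hm]
    linarith
  have htail : ∀ i : Fin p, N ≤ (i : ℕ) →
      lam i / (m * lam i + ε) ≤ m⁻¹ * Real.exp (-c) ^ ((i : ℕ) + 1 - N) := fun i hi => by
    have hexp : Real.exp (-c * (((i : ℕ) : ℝ) + 1 - N)) = Real.exp (-c) ^ ((i : ℕ) + 1 - N) := by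
      rw [← Real.exp_nat_mul, Nat.cast_sub (by omega)]
      push_cast
      ring_nf
    calc lam i / (m * lam i + ε) ≤ lam i / ε := by
          gcongr
          · exact hnn i
          · linarith [mul_nonneg hm.le (hnn i)]
      _ ≤ ε / m * Real.exp (-c * (((i : ℕ) : ℝ) + 1 - N)) / ε := by gcongr; exact hdecay i hi
      _ = m⁻¹ * Real.exp (-c) ^ ((i : ℕ) + 1 - N) := by rw [hexp]; field_simp
  calc ∑ i, lam i / (m * lam i + ε)
      ≤ m⁻¹ * (N + Real.exp (-c) / (1 - Real.exp (-c))) :=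
        sum_le_of_le_of_le_geometric_tail (inv_nonneg.mpr hm.le) (Real.exp_pos _).le
          (Real.exp_lt_one_iff.mpr (neg_neg_of_pos hc)) (fun i _ => hhead i) htail
    _ ≤ m⁻¹ * (N + c⁻¹) := by gcongr; exact exp_neg_div_one_sub_exp_neg_le_inv hc
    _ = (N + c⁻¹) / m := inv_mul_eq_div _ _

end ExponentialDecay

theorem excess_expected_loss_optimal_posterior_general
    {p : ℕ} (n : ℕ) (hn : 2 ≤ n) (ε : ℝ) (hε : 0 < ε) (c : ℝ) (hc : 0 < c)
    (w : Fin p → ℝ)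
    (lam : Fin p → ℝ) (hnn : ∀ i, 0 ≤ lam i)
    (U : Matrix (Fin p) (Fin p) ℝ) (hU : U * U.transpose = 1)
    (H : Matrix (Fin p) (Fin p) ℝ) (hH : H = U * Matrix.diagonal lam * U.transpose)
    (Sq : Matrix (Fin p) (Fin p) ℝ)
    (hSq : Sq = U * Matrix.diagonal (fun i => (2 * ((n : ℝ) - 1) * lam i + ε)⁻¹) *
        U.transpose)
    (ℓw : ℝ) (ℓ : (Fin p → ℝ) → ℝ)
    (hℓ : ℓ = fun x => ℓw + (1 / 2) * ((x - w) ⬝ᵥ H.mulVec (x - w)))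
    (pne : ℕ)
    (hdecay : ∀ i : Fin p, pne ≤ (i : ℕ) →
        lam i ≤ ε / (2 * ((n : ℝ) - 1)) * Real.exp (-c * (((i : ℕ) : ℝ) + 1 - pne))) :
    ((∫ x : Fin p → ℝ, gaussianPdf w Sq x * ℓ x) - ℓw =
        (1 / 2) * ∑ i, lam i / (2 * ((n : ℝ) - 1) * lam i + ε))
    ∧ (1 / 2) * (∑ i, lam i / (2 * ((n : ℝ) - 1) * lam i + ε)) ≤
        ((pne : ℝ) + 1 / c) / (4 * ((n : ℝ) - 1)) := by
  have hm : (0 : ℝ) < 2 * ((n : ℝ) - 1) := by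
    have : (2 : ℝ) ≤ n := by exact_mod_cast hn
    linarith
  have hprec : ∀ i, 0 < 2 * ((n : ℝ) - 1) * lam i + ε := fun i => by
    have := hnn i
    positivity
  constructor
  · let v : Fin p → ℝ≥0 := fun i => ⟨_, (inv_pos.mpr (hprec i)).le⟩
    have hv : ∀ i, v i ≠ 0 := fun i => by
      rw [ne_eq, ← NNReal.coe_eq_zero]
      exact (inv_pos.mpr (hprec i)).ne'
    subst hℓ hH hSq
    calc _ = (ℓw + 1 / 2 * ∑ i, lam i * (v i : ℝ)) - ℓw :=
          congrArg (· - ℓw) (integral_gaussianPdf_mul_quadratic hU hv w lam ℓw)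
      _ = _ := by simp only [add_sub_cancel_left, div_eq_mul_inv]; rfl
  · calc (1 / 2) * (∑ i, lam i / (2 * ((n : ℝ) - 1) * lam i + ε))
        ≤ (1 / 2) * ((pne + c⁻¹) / (2 * ((n : ℝ) - 1))) := by
          gcongr
          exact sum_div_mul_add_le_of_exp_decay hm hε hc hnn hdecay
      _ = ((pne : ℝ) + 1 / c) / (4 * ((n : ℝ) - 1)) := by
          field_simp
          ring

/-- with the optimal posterior `Σq = U diag(1/(2(n−1)λᵢ+ε)) Uᵀ` for a quadratic
loss with Hessian `H = U diag(λ) Uᵀ ⪰ 0` (eigenvalues `λ₁ ≥ … ≥ λ_p ≥ 0`, 0-indexed here),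
the excess expected loss equals `E_{w'∼Q}[ℓ(w')] − ℓ(w) = ½ ∑ᵢ λᵢ/(2(n−1)λᵢ+ε)`; moreover,
under the sloppy decay `λᵢ ≤ (ε/(2(n−1))) e^{−c(i − p(n,ε))}` for `i > p(n,ε)` (1-based),
where `p(n,ε) = #{i : λᵢ ≥ ε/(2(n−1))}` and `c > 0`, this is at most
`(p(n,ε) + 1/c)/(4(n−1))`. -/
theorem excess_expected_loss_optimal_posterior
    {p : ℕ} (n : ℕ) (hn : 2 ≤ n) (ε : ℝ) (hε : 0 < ε) (c : ℝ) (hc : 0 < c)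
    (w : Fin p → ℝ)
    (lam : Fin p → ℝ) (hanti : Antitone lam) (hnn : ∀ i, 0 ≤ lam i)
    (U : Matrix (Fin p) (Fin p) ℝ) (hU : U * U.transpose = 1)
    (H : Matrix (Fin p) (Fin p) ℝ) (hH : H = U * Matrix.diagonal lam * U.transpose)
    (Sq : Matrix (Fin p) (Fin p) ℝ)
    (hSq : Sq = U * Matrix.diagonal (fun i => (2 * ((n : ℝ) - 1) * lam i + ε)⁻¹) *
        U.transpose)
    (ℓw : ℝ) (ℓ : (Fin p → ℝ) → ℝ)
    (hℓ : ℓ = fun x => ℓw + (1 / 2) * ((x - w) ⬝ᵥ H.mulVec (x - w)))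
    (pne : ℕ)
    (hpne : pne = (Finset.univ.filter fun i : Fin p => ε / (2 * ((n : ℝ) - 1)) ≤ lam i).card)
    (hdecay : ∀ i : Fin p, pne ≤ (i : ℕ) →
        lam i ≤ ε / (2 * ((n : ℝ) - 1)) * Real.exp (-c * (((i : ℕ) : ℝ) + 1 - pne))) :
    ((∫ x : Fin p → ℝ, gaussianPdf w Sq x * ℓ x) - ℓw =
        (1 / 2) * ∑ i, lam i / (2 * ((n : ℝ) - 1) * lam i + ε))
    ∧ (1 / 2) * (∑ i, lam i / (2 * ((n : ℝ) - 1) * lam i + ε)) ≤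
        ((pne : ℝ) + 1 / c) / (4 * ((n : ℝ) - 1)) :=
  excess_expected_loss_optimal_posterior_general n hn ε hε c hc w lam hnn U hU H hH Sq hSq ℓw ℓ hℓ
    pne hdecay
end

section
/- If A ∈ ℝ^{p×p} and B ∈ ℝ^{q×q} are symmetric positive semi-definite with eigenvalues (sorted descending) λ_i(A) ≤ e^{−c_1 i} and λ_j(B) ≤ e^{−c_2 j} for constants c_1, c_2 > 0, then the k-th largest eigenvalue of the Kronecker product A ⊗ B is at most e^{−min(c_1,c_2)√k}. -/
/-!
Conjugating `A ⊗ B` by `U_A ⊗ U_B`, where `U_A`, `U_B` diagonalise `A` and `B`, shows that the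
eigenvalues of `A ⊗ B`, with multiplicity, are the products `λᵢ(A) λⱼ(B)`. With
`c = min c₁ c₂` and `t = e^{-c √(k+1)}`, every pair with `t < λᵢ(A) λⱼ(B) ≤ e^{-c (i + j)}`
(1-based) has `(i + j)² ≤ k`, so `i, j < ⌊√k⌋`; there are at most `⌊√k⌋² ≤ k` such pairs.
Hence at most `k` eigenvalues of `A ⊗ B` exceed `t`, and the one at (0-based) position `k`
in descending order does not.
-/

open scoped Kronecker
open Matrix

open Finset Polynomial

theorem Antitone.le_of_card_filter_lt_le {α : Type*} [LinearOrder α] {n : ℕ} {f : Fin n → α}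
    (hf : Antitone f) {t : α} {k : Fin n} (hk : #{i | t < f i} ≤ k) : f k ≤ t := by
  by_contra! hlt
  have : Iic k ⊆ ({i | t < f i} : Finset (Fin n)) := fun i hi => by
    simpa using hlt.trans_le (hf (mem_Iic.mp hi))
  have := card_le_card this
  rw [Fin.card_Iic] at this
  omega

theorem Fin.card_filter_add_sq_le (m n k : ℕ) :
    #{x : Fin m × Fin n | ((x.1 : ℕ) + 1 + ((x.2 : ℕ) + 1)) ^ 2 ≤ k} ≤ k := by
  set s := Nat.sqrt k
  calc #{x : Fin m × Fin n | ((x.1 : ℕ) + 1 + ((x.2 : ℕ) + 1)) ^ 2 ≤ k}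
      ≤ #(range s ×ˢ range s) := by
        refine card_le_card_of_injOn (fun x => ((x.1 : ℕ), (x.2 : ℕ))) (fun x hx => ?_) ?_
        · have : (x.1 : ℕ) + 1 + ((x.2 : ℕ) + 1) ≤ s := Nat.le_sqrt'.mpr (by simpa using hx)
          simp only [coe_product, coe_range, Set.mem_prod, Set.mem_Iio]
          omega
        · intro x _ y _ hxy
          simp only [Prod.mk.injEq] at hxy
          exact Prod.ext (Fin.ext hxy.1) (Fin.ext hxy.2)
    _ = s * s := by simp
    _ ≤ k := Nat.sqrt_le k

theorem Finset.univ_val_map_comp_equiv {α β γ : Type*} [Fintype α] [Fintype β] (f : β → γ)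
    (e : α ≃ β) : univ.val.map (f ∘ e) = univ.val.map f := by
  rw [← Multiset.map_map, Multiset.map_univ_val_equiv]

namespace Matrix

theorem charpoly_mul_mul_of_mul_eq_one {R n : Type*} [CommRing R] [Fintype n] [DecidableEq n]
    {U V : Matrix n n R} (h : V * U = 1) (M : Matrix n n R) :
    (U * M * V).charpoly = M.charpoly := by
  rw [mul_assoc, charpoly_mul_comm, mul_assoc, h, mul_one]

variable {𝕜 ι κ : Type*} [RCLike 𝕜] [Fintype ι] [Fintype κ] [DecidableEq ι] [DecidableEq κ]

theorem IsHermitian.charpoly_kronecker {A : Matrix ι ι 𝕜} {B : Matrix κ κ 𝕜}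
    (hA : A.IsHermitian) (hB : B.IsHermitian) :
    (A ⊗ₖ B).charpoly =
      ∏ x : ι × κ, (X - C ((hA.eigenvalues x.1 * hB.eigenvalues x.2 : ℝ) : 𝕜)) := by
  have hUV : star (hA.eigenvectorUnitary : Matrix ι ι 𝕜) ⊗ₖ
      star (hB.eigenvectorUnitary : Matrix κ κ 𝕜) *
      ((hA.eigenvectorUnitary : Matrix ι ι 𝕜) ⊗ₖ (hB.eigenvectorUnitary : Matrix κ κ 𝕜)) = 1 := by
    rw [← mul_kronecker_mul, Unitary.coe_star_mul_self, Unitary.coe_star_mul_self,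
      one_kronecker_one]
  conv_lhs => rw [hA.spectral_theorem, hB.spectral_theorem, Unitary.conjStarAlgAut_apply,
    Unitary.conjStarAlgAut_apply, mul_kronecker_mul, mul_kronecker_mul]
  rw [charpoly_mul_mul_of_mul_eq_one hUV, diagonal_kronecker_diagonal, charpoly_diagonal]
  simp

theorem IsHermitian.eigenvalues_kronecker {A : Matrix ι ι 𝕜} {B : Matrix κ κ 𝕜}
    (hA : A.IsHermitian) (hB : B.IsHermitian) (hAB : (A ⊗ₖ B).IsHermitian) :
    univ.val.map hAB.eigenvalues =
      univ.val.map fun x : ι × κ => hA.eigenvalues x.1 * hB.eigenvalues x.2 := by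
  apply Multiset.map_injective (RCLike.ofReal_injective (K := 𝕜))
  rw [Multiset.map_map, ← hAB.roots_charpoly_eq_eigenvalues, hA.charpoly_kronecker hB,
    roots_prod _ _ (prod_ne_zero_iff.mpr fun _ _ => X_sub_C_ne_zero _)]
  simp only [roots_X_sub_C, Multiset.bind_singleton]
  rw [Multiset.map_map]
  rfl

theorem IsHermitian.exists_equiv_eigDesc_comp {M : Matrix ι ι ℝ} (hM : M.IsHermitian) :
    ∃ e : ι ≃ Fin (Fintype.card ι), eigDesc hM ∘ e = hM.eigenvalues :=
  ⟨(Fintype.equivFin ι).trans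
    ((Tuple.sort (hM.eigenvalues ∘ (Fintype.equivFin ι).symm)).symm.trans Fin.revPerm),
    funext fun i => by simp [eigDesc]⟩

theorem IsHermitian.eigDesc_antitone {M : Matrix ι ι ℝ} (hM : M.IsHermitian) :
    Antitone (eigDesc hM) :=
  (Tuple.monotone_sort _).comp_antitone Fin.rev_anti

theorem PosSemidef.eigDesc_nonneg {M : Matrix ι ι ℝ} (hM : M.PosSemidef)
    (i : Fin (Fintype.card ι)) : 0 ≤ eigDesc hM.1 i :=
  hM.eigenvalues_nonneg _

theorem IsHermitian.eigDesc_kronecker {A : Matrix ι ι ℝ} {B : Matrix κ κ ℝ}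
    (hA : A.IsHermitian) (hB : B.IsHermitian) (hAB : (A ⊗ₖ B).IsHermitian) :
    univ.val.map (eigDesc hAB) =
      univ.val.map fun y : Fin _ × Fin _ => eigDesc hA y.1 * eigDesc hB y.2 := by
  obtain ⟨eA, heA⟩ := hA.exists_equiv_eigDesc_comp
  obtain ⟨eB, heB⟩ := hB.exists_equiv_eigDesc_comp
  obtain ⟨eAB, heAB⟩ := hAB.exists_equiv_eigDesc_comp
  rw [← univ_val_map_comp_equiv (eigDesc hAB) eAB, heAB, hA.eigenvalues_kronecker hB,
    ← univ_val_map_comp_equiv _ (eA.prodCongr eB), ← heA, ← heB]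
  rfl

theorem IsHermitian.card_filter_lt_eigDesc_kronecker {A : Matrix ι ι ℝ} {B : Matrix κ κ ℝ}
    (hA : A.IsHermitian) (hB : B.IsHermitian) (hAB : (A ⊗ₖ B).IsHermitian) (t : ℝ) :
    #{k | t < eigDesc hAB k} = #{y : Fin _ × Fin _ | t < eigDesc hA y.1 * eigDesc hB y.2} := by
  have h := congrArg (Multiset.countP (t < ·)) (hA.eigDesc_kronecker hB hAB)
  simpa only [Multiset.countP_map, ← filter_val, ← card_def] using h

end Matrix

open Real

theorem Real.sq_le_of_exp_neg_mul_sqrt_lt {c : ℝ} (hc : 0 < c) {n k : ℕ}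
    (h : exp (-c * √(k + 1)) < exp (-c * n)) : n ^ 2 ≤ k := by
  have hlt : (n : ℝ) < √(k + 1) := lt_of_mul_lt_mul_left (by linarith [exp_lt_exp.mp h]) hc.le
  have : (n : ℝ) ^ 2 < k + 1 := (lt_sqrt (by positivity)).mp hlt
  have : n ^ 2 < k + 1 := by exact_mod_cast this
  omega

theorem Real.exp_neg_mul_mul_exp_neg_mul_le {c₁ c₂ a b : ℝ} (ha : 0 ≤ a) (hb : 0 ≤ b) :
    exp (-c₁ * a) * exp (-c₂ * b) ≤ exp (-(min c₁ c₂) * (a + b)) := by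
  rw [← exp_add, exp_le_exp]
  nlinarith [min_le_left c₁ c₂, min_le_right c₁ c₂]

/-- if `A`, `B` are symmetric positive semi-definite with descending
eigenvalues `λᵢ(A) ≤ e^{−c₁ i}` and `λⱼ(B) ≤ e^{−c₂ j}` (1-based indices, `c₁, c₂ > 0`),
then the `k`-th largest eigenvalue of the Kronecker product `A ⊗ B` is at most
`e^{−min(c₁,c₂)√k}`. -/
theorem kronecker_eigenvalue_decay
    {p q : ℕ} {A : Matrix (Fin p) (Fin p) ℝ} {B : Matrix (Fin q) (Fin q) ℝ}
    (hA : A.PosSemidef) (hB : B.PosSemidef)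
    (c₁ c₂ : ℝ) (hc₁ : 0 < c₁) (hc₂ : 0 < c₂)
    (hAdecay : ∀ i : Fin (Fintype.card (Fin p)), eigDesc hA.1 i ≤ Real.exp (-c₁ * ((i : ℕ) + 1)))
    (hBdecay : ∀ j : Fin (Fintype.card (Fin q)), eigDesc hB.1 j ≤ Real.exp (-c₂ * ((j : ℕ) + 1)))
    (hAB : (A ⊗ₖ B).IsHermitian) :
    ∀ k : Fin (Fintype.card (Fin p × Fin q)),
      eigDesc hAB k ≤ Real.exp (-(min c₁ c₂) * Real.sqrt ((k : ℕ) + 1)) := by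
  intro k
  refine hAB.eigDesc_antitone.le_of_card_filter_lt_le ?_
  rw [hA.1.card_filter_lt_eigDesc_kronecker hB.1]
  refine (card_le_card fun x hx => ?_).trans (Fin.card_filter_add_sq_le _ _ k)
  simp only [mem_filter, mem_univ, true_and] at hx ⊢
  refine sq_le_of_exp_neg_mul_sqrt_lt (lt_min hc₁ hc₂) ?_
  calc _ < eigDesc hA.1 x.1 * eigDesc hB.1 x.2 := hx
    _ ≤ exp (-c₁ * ((x.1 : ℕ) + 1)) * exp (-c₂ * ((x.2 : ℕ) + 1)) :=
      mul_le_mul (hAdecay _) (hBdecay _) (hB.eigDesc_nonneg _) (exp_nonneg _)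
    _ ≤ _ := by
      push_cast
      exact exp_neg_mul_mul_exp_neg_mul_le (by positivity) (by positivity)
end
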